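/- arXiv:2006.10926 — 3 statements merged into one kernel-verified Lean document; each statement's English description precedes it below -/
import Mathlib

section
/- If f₁ is measurable and regularly varying at infinity with index p₁, f₂ is measurable and regularly varying at infinity with index p₂, and f₂(s) → ∞ as s → ∞, then the composition f₁ ∘ f₂ is regularly varying at infinity with index p₁·p₂. -/
/-!
With `h = log ∘ f₁ ∘ exp`, regular variation of `f₁` says `h (s + t) - h s → p₁ t` for each `t`.
The uniform convergence theorem upgrades this to `h (y + x) - h y → p₁ x₀` whenever `y → ∞` and
`x → x₀`: by convergence in measure, on a bounded interval the points where the defect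
`h (y + t) - h y - p₁ t` is large form a set of small measure, so a translate of one good set meets
another good set, and the defect at `x` is the difference of two small defects. Take
`y = log f₂ s → ∞` and `x = log f₂ (c s) - log f₂ s → p₂ log c`.
-/

open Filter Topology

/-- Regular variation at infinity with index `p`. -/
def RegularlyVaryingAtTop (f : ℝ → ℝ) (p : ℝ) : Prop :=
  ∀ c : ℝ, 0 < c → Tendsto (fun s => f (c * s) / f s) atTop (𝓝 (c ^ p))

open MeasureTheory Set Real

theorem MeasureTheory.exists_mem_notMem_of_measure_add_lt {α : Type*} [MeasurableSpace α]
    {μ : Measure α} {S A B : Set α} (h : μ A + μ B < μ S) : ∃ s ∈ S, s ∉ A ∧ s ∉ B := by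
  by_contra! hcover
  have hS : S ⊆ A ∪ B := fun s hs => by
    by_contra hs'
    simp only [mem_union, not_or] at hs'
    exact hs'.2 (hcover s hs hs'.1)
  exact (measure_mono hS |>.trans (measure_union_le A B)).not_gt h

section UniformConvergence

variable {h : ℝ → ℝ} {p : ℝ}

theorem tendsto_volume_setOf_le_abs_sub (hm : Measurable h)
    (H : ∀ t, Tendsto (fun s => h (s + t) - h s) atTop (𝓝 (p * t))) (a b : ℝ) {δ : ℝ}
    (hδ : 0 < δ) :
    Tendsto (fun s => volume ({t | δ ≤ |h (s + t) - h s - p * t|} ∩ Icc a b)) atTop (𝓝 0) := by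
  rw [tendsto_iff_seq_tendsto]
  intro y hy
  have hconv : TendstoInMeasure (volume.restrict (Icc a b))
      (fun n t => h (y n + t) - h (y n) - p * t) atTop 0 := by
    refine tendstoInMeasure_of_tendsto_ae (fun n => ?_) (ae_of_all _ fun t => ?_)
    · exact ((hm.comp (measurable_const_add _)).sub_const _ |>.sub
        (measurable_const_mul p)).aestronglyMeasurable
    · simpa using ((H t).comp hy).sub_const (p * t)
  simpa [Function.comp_def, Measure.restrict_apply' measurableSet_Icc] using
    (tendstoInMeasure_iff_norm.mp hconv) δ hδ

theorem tendsto_sub_sub_mul_of_eventually_mem_Icc (hm : Measurable h)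
    (H : ∀ t, Tendsto (fun s => h (s + t) - h s) atTop (𝓝 (p * t))) {ι : Type*} {l : Filter ι}
    {x y : ι → ℝ} {a b : ℝ} (hx : ∀ᶠ i in l, x i ∈ Icc a b) (hy : Tendsto y l atTop) :
    Tendsto (fun i => h (y i + x i) - h (y i) - p * x i) l (𝓝 0) := by
  rw [Metric.tendsto_nhds]
  intro ε hε
  have hxy : Tendsto (fun i => y i + x i) l atTop :=
    tendsto_atTop_add_right_of_le' l a hy (hx.mono fun i hi => hi.1)
  have hbad₁ := ((tendsto_volume_setOf_le_abs_sub hm H a (b + 1) (half_pos hε)).comp hy).eventually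
    (gt_mem_nhds (show (0 : ENNReal) < 1 / 2 by norm_num))
  have hbad₂ := ((tendsto_volume_setOf_le_abs_sub hm H 0 1 (half_pos hε)).comp hxy).eventually
    (gt_mem_nhds (show (0 : ENNReal) < 1 / 2 by norm_num))
  filter_upwards [hx, hbad₁, hbad₂] with i hxi h₁ h₂
  obtain ⟨s, hs, hs₂, hs₁⟩ := exists_mem_notMem_of_measure_add_lt (S := Icc (0 : ℝ) 1)
    (A := {t | ε / 2 ≤ |h (y i + x i + t) - h (y i + x i) - p * t|} ∩ Icc 0 1)
    (B := (x i + ·) ⁻¹' ({t | ε / 2 ≤ |h (y i + t) - h (y i) - p * t|} ∩ Icc a (b + 1))) (by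
      rw [measure_preimage_add volume, Real.volume_Icc, sub_zero, ENNReal.ofReal_one]
      calc _ < (1 / 2 : ENNReal) + 1 / 2 := ENNReal.add_lt_add h₂ h₁
        _ = 1 := ENNReal.add_halves 1)
  have hmem : x i + s ∈ Icc a (b + 1) := ⟨by linarith [hxi.1, hs.1], by linarith [hxi.2, hs.2]⟩
  have hs₁' : |h (y i + (x i + s)) - h (y i) - p * (x i + s)| < ε / 2 :=
    not_le.mp fun hle => hs₁ ⟨hle, hmem⟩
  have hs₂' : |h (y i + x i + s) - h (y i + x i) - p * s| < ε / 2 :=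
    not_le.mp fun hle => hs₂ ⟨hle, hs⟩
  rw [Real.dist_eq, sub_zero]
  calc |h (y i + x i) - h (y i) - p * x i|
      = |(h (y i + (x i + s)) - h (y i) - p * (x i + s))
          - (h (y i + x i + s) - h (y i + x i) - p * s)| := by ring_nf
    _ ≤ _ := abs_sub _ _
    _ < ε / 2 + ε / 2 := add_lt_add hs₁' hs₂'
    _ = ε := add_halves ε

theorem tendsto_sub_of_tendsto_sub_add (hm : Measurable h)
    (H : ∀ t, Tendsto (fun s => h (s + t) - h s) atTop (𝓝 (p * t))) {ι : Type*} {l : Filter ι}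
    {x y : ι → ℝ} {x₀ : ℝ} (hx : Tendsto x l (𝓝 x₀)) (hy : Tendsto y l atTop) :
    Tendsto (fun i => h (y i + x i) - h (y i)) l (𝓝 (p * x₀)) := by
  have hx_mem : ∀ᶠ i in l, x i ∈ Icc (x₀ - 1) (x₀ + 1) :=
    hx.eventually (Icc_mem_nhds (sub_one_lt x₀) (lt_add_one x₀))
  simpa using (tendsto_sub_sub_mul_of_eventually_mem_Icc hm H hx_mem hy).add (hx.const_mul p)

end UniformConvergence

namespace RegularlyVaryingAtTop

variable {f : ℝ → ℝ} {p : ℝ}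

/-- `Real.log` is `log |·|`, and `f` is eventually nonzero because the ratios tend to `c ^ p ≠ 0`;
this is what makes `Real.log_div` applicable. -/
theorem tendsto_log_sub (hf : RegularlyVaryingAtTop f p) {c : ℝ} (hc : 0 < c) :
    Tendsto (fun s => log (f (c * s)) - log (f s)) atTop (𝓝 (p * log c)) := by
  have hlim := hf c hc
  have hlog := ((continuousAt_log (rpow_pos_of_pos hc p).ne').tendsto.comp hlim)
  rw [log_rpow hc] at hlog
  refine hlog.congr' ?_
  filter_upwards [hlim.eventually_ne (rpow_pos_of_pos hc p).ne'] with s hs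
  obtain ⟨hcs, hs⟩ := div_ne_zero_iff.mp hs
  exact log_div hcs hs

theorem tendsto_log_comp_exp_sub (hf : RegularlyVaryingAtTop f p) (t : ℝ) :
    Tendsto (fun s => log (f (exp (s + t))) - log (f (exp s))) atTop (𝓝 (p * t)) := by
  have hlim := (hf.tendsto_log_sub (exp_pos t)).comp tendsto_exp_atTop
  rw [log_exp] at hlim
  simpa only [Function.comp_def, exp_add, mul_comm (exp t)] using hlim

end RegularlyVaryingAtTop

theorem rv_comp_general (f₁ f₂ : ℝ → ℝ) (p₁ p₂ : ℝ)
    (hmeas₁ : Measurable f₁)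
    (hpos₁ : ∀ s : ℝ, 0 < s → 0 < f₁ s)
    (hrv₁ : RegularlyVaryingAtTop f₁ p₁) (hrv₂ : RegularlyVaryingAtTop f₂ p₂)
    (hinf : Tendsto f₂ atTop atTop) :
    RegularlyVaryingAtTop (f₁ ∘ f₂) (p₁ * p₂) := by
  intro c hc
  have hm : Measurable fun t => log (f₁ (exp t)) :=
    measurable_log.comp (hmeas₁.comp measurable_exp)
  have hlog := tendsto_sub_of_tendsto_sub_add hm hrv₁.tendsto_log_comp_exp_sub
    (hrv₂.tendsto_log_sub hc) (tendsto_log_atTop.comp hinf)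
  have hval : exp (p₁ * (p₂ * log c)) = c ^ (p₁ * p₂) := by
    rw [rpow_def_of_pos hc, ← mul_assoc, mul_comm]
  rw [← hval]
  refine ((continuous_exp.tendsto _).comp hlog).congr' ?_
  have hinf_c : Tendsto (fun s => f₂ (c * s)) atTop atTop :=
    hinf.comp (tendsto_id.const_mul_atTop hc)
  filter_upwards [hinf.eventually_gt_atTop 0, hinf_c.eventually_gt_atTop 0] with s hs hcs
  simp only [Function.comp_apply, add_sub_cancel, exp_sub, exp_log hs, exp_log hcs,
    exp_log (hpos₁ _ hs), exp_log (hpos₁ _ hcs)]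

theorem rv_comp (f₁ f₂ : ℝ → ℝ) (p₁ p₂ : ℝ)
    (hmeas₁ : Measurable f₁) (hmeas₂ : Measurable f₂)
    (hpos₁ : ∀ s : ℝ, 0 < s → 0 < f₁ s) (hpos₂ : ∀ s : ℝ, 0 < s → 0 < f₂ s)
    (hrv₁ : RegularlyVaryingAtTop f₁ p₁) (hrv₂ : RegularlyVaryingAtTop f₂ p₂)
    (hinf : Tendsto f₂ atTop atTop) :
    RegularlyVaryingAtTop (f₁ ∘ f₂) (p₁ * p₂) :=
  rv_comp_general f₁ f₂ p₁ p₂ hmeas₁ hpos₁ hrv₁ hrv₂ hinf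
end

section
/- Let X be a nonnegative random variable with X > 0 almost surely such that P(X ≤ u)/u → κ as u ↓ 0 for some constant κ ∈ (0,∞). Let f : (0,∞) → (0,∞) be measurable, regularly varying at 0 with index p > 0, and satisfying inf_{s ≥ s₀} f(s) > 0 for every s₀ > 0. If p < 1 then E[1/f(X)] < ∞, while if p > 1 then E[1/f(X)] = ∞. -/
open MeasureTheory ENNReal Filter Topology

/-- Regular variation at 0 (from the right) with index `p`. -/
def RegularlyVaryingAtZero (f : ℝ → ℝ) (p : ℝ) : Prop :=
  ∀ c : ℝ, 0 < c → Tendsto (fun s => f (c * s) / f s) (𝓝[>] (0 : ℝ)) (𝓝 (c ^ p))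

/-!
Put `k x = log f (exp (-x)) + p x`. Regular variation says exactly that `k (x + y) - k x → 0`
for every `y`; as `k` is measurable, a Steinhaus-type measure argument makes this uniform in
`y ∈ [0, 1]`, so `k` grows sublinearly, `log f u / log u → p`, and `u ^ (p + ε) ≤ f u ≤ u ^ (p - ε)`
for small `u`. On the dyadic shells `(δ / 2 ^ (n + 1), δ / 2 ^ n]` the law of `X` puts mass of
order `δ / 2 ^ n`, so `E[X ^ (-α); X ≤ δ]` is dominated by a geometric series when `α < 1`, whereas
for `β ≥ 1` every shell contributes at least a fixed amount to `E[X ^ (-β)]`. Away from `0`, `1 / f`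
is bounded thanks to the positive infima.
-/

open Set

section UniformConvergence

variable {k : ℝ → ℝ}

theorem eventually_forall_abs_add_sub_lt (hk : Measurable k)
    (h : ∀ y, Tendsto (fun x => k (x + y) - k x) atTop (𝓝 0)) {ε : ℝ} (hε : 0 < ε) :
    ∀ᶠ x in atTop, ∀ y ∈ Icc (0 : ℝ) 1, |k (x + y) - k x| < ε := by
  set G : ℝ → Set ℝ := fun x => {z ∈ Icc (0 : ℝ) 2 | |k (x + z) - k x| < ε / 2}
  have hG_meas (x : ℝ) : MeasurableSet (G x) :=
    measurableSet_Icc.inter <| measurableSet_lt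
      ((hk.comp (measurable_const_add x)).sub_const _).abs measurable_const
  have hG_vol : Tendsto (fun x => volume (G x)) atTop (𝓝 (volume (Icc (0 : ℝ) 2))) := by
    refine tendsto_measure_of_tendsto_indicator atTop hG_meas measurableSet_Icc
      measure_Icc_lt_top.ne (.of_forall fun x => sep_subset _ _) fun z => ?_
    by_cases hz : z ∈ Icc (0 : ℝ) 2
    · have hclose : ∀ᶠ x in atTop, |k (x + z) - k x| < ε / 2 := by
        simpa using (h z).abs.eventually (gt_mem_nhds (by simpa using half_pos hε))
      filter_upwards [hclose] with x hx using iff_of_true ⟨hz, hx⟩ hz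
    · exact .of_forall fun x => iff_of_false (fun h' => hz h'.1) hz
  have hbig : ∀ᶠ x in atTop, ENNReal.ofReal (3 / 2) < volume (G x) :=
    hG_vol.eventually (lt_mem_nhds (by rw [Real.volume_Icc]; norm_num))
  obtain ⟨x₀, hx₀⟩ := eventually_atTop.1 hbig
  filter_upwards [eventually_ge_atTop x₀] with x hx y hy
  -- Both `G x` and the translate `y + G (x + y)` fill more than half of `[0, 3]`.
  obtain ⟨z, hzx, hzy⟩ : (G x ∩ (· + -y) ⁻¹' G (x + y)).Nonempty := by
    refine nonempty_inter_of_measure_lt_add (u := Icc 0 3) volume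
      ((hG_meas _).preimage (measurable_add_const _))
      (fun z hz => Icc_subset_Icc le_rfl (by norm_num) hz.1)
      (fun z hz => ⟨by linarith [hz.1.1, hy.1], by linarith [hz.1.2, hy.2]⟩) ?_
    rw [measure_preimage_add_right, Real.volume_Icc]
    calc ENNReal.ofReal (3 - 0) = ENNReal.ofReal (3 / 2) + ENNReal.ofReal (3 / 2) := by
          rw [← ENNReal.ofReal_add] <;> norm_num
      _ < volume (G x) + volume (G (x + y)) :=
          ENNReal.add_lt_add (hx₀ x hx) (hx₀ _ (by linarith [hy.1]))
  have h₁ : |k (x + z) - k x| < ε / 2 := hzx.2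
  have h₂ : |k (x + z) - k (x + y)| < ε / 2 := by
    simpa [show x + y + (z + -y) = x + z by ring] using hzy.2
  rw [abs_lt] at h₁ h₂ ⊢
  constructor <;> linarith

theorem abs_sub_le_of_forall_abs_add_sub_le {x₀ ε : ℝ}
    (h : ∀ x ≥ x₀, ∀ y ∈ Icc (0 : ℝ) 1, |k (x + y) - k x| ≤ ε) {x : ℝ} (hx : x₀ ≤ x) :
    |k x - k x₀| ≤ ε * (x - x₀ + 1) := by
  have hε : 0 ≤ ε := by simpa using h x₀ le_rfl 0 (by simp)
  have hsteps (n : ℕ) : ∀ x, x₀ ≤ x → x ≤ x₀ + n → |k x - k x₀| ≤ ε * n := by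
    induction n with
    | zero => intro x h₁ h₂; simp [le_antisymm (by simpa using h₂) h₁]
    | succ n ih =>
      intro x h₁ h₂
      set x' := max x₀ (x - 1)
      have hstep : |k x - k x'| ≤ ε := by
        simpa using h x' (le_max_left _ _) (x - x')
          ⟨by simp [x', h₁], by linarith [le_max_right x₀ (x - 1)]⟩
      have := ih x' (le_max_left _ _) (max_le (by simp) (by push_cast at h₂; linarith))
      push_cast
      calc |k x - k x₀| ≤ |k x - k x'| + |k x' - k x₀| := abs_sub_le _ _ _
        _ ≤ ε * (n + 1) := by linarith
  calc |k x - k x₀| ≤ ε * ⌈x - x₀⌉₊ := hsteps _ x hx (by linarith [Nat.le_ceil (x - x₀)])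
    _ ≤ ε * (x - x₀ + 1) := by
        gcongr
        exact (Nat.ceil_lt_add_one (by linarith)).le

theorem isLittleO_id_of_tendsto_add_sub (hk : Measurable k)
    (h : ∀ y, Tendsto (fun x => k (x + y) - k x) atTop (𝓝 0)) : k =o[atTop] id := by
  refine Asymptotics.isLittleO_iff.2 fun c hc => ?_
  obtain ⟨x₀, hx₀⟩ := eventually_atTop.1 (eventually_forall_abs_add_sub_lt hk h (half_pos hc))
  filter_upwards [eventually_ge_atTop x₀, eventually_ge_atTop 0,
    eventually_ge_atTop (2 * (|k x₀| + c / 2 * (1 - x₀)) / c)] with x hx hx0 hxc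
  have hlin := abs_sub_le_of_forall_abs_add_sub_le (fun x hx y hy => (hx₀ x hx y hy).le) hx
  rw [div_le_iff₀ hc] at hxc
  rw [Real.norm_eq_abs, Real.norm_eq_abs, id, abs_of_nonneg hx0]
  linarith [abs_sub_abs_le_abs_sub (k x) (k x₀)]

end UniformConvergence

namespace RegularlyVaryingAtZero

variable {f : ℝ → ℝ} {p : ℝ}

theorem tendsto_log_div_log (hf : Measurable f) (hfpos : ∀ s, 0 < s → 0 < f s)
    (hrv : RegularlyVaryingAtZero f p) :
    Tendsto (fun u => Real.log (f u) / Real.log u) (𝓝[>] 0) (𝓝 p) := by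
  set k : ℝ → ℝ := fun x => Real.log (f (Real.exp (-x))) + p * x
  have hk : Measurable k := by fun_prop
  have hexp : Tendsto (fun x => Real.exp (-x)) atTop (𝓝[>] 0) :=
    Real.tendsto_exp_atBot_nhdsGT.comp tendsto_neg_atTop_atBot
  have hadd (y : ℝ) : Tendsto (fun x => k (x + y) - k x) atTop (𝓝 0) := by
    have hc : 0 < Real.exp (-y) := Real.exp_pos _
    have hlog := ((Real.continuousAt_log (Real.rpow_pos_of_pos hc p).ne').tendsto.comp
      (hrv _ hc)).comp hexp
    rw [Real.log_rpow hc, Real.log_exp] at hlog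
    convert hlog.add_const (p * y) using 1
    · ext x
      simp only [Function.comp, k, neg_add, Real.exp_add]
      rw [Real.log_div (hfpos _ (by positivity)).ne' (hfpos _ (by positivity)).ne',
        mul_comm (Real.exp (-y))]
      ring
    · simp
  have hnlog : Tendsto (fun u => -Real.log u) (𝓝[>] 0) atTop :=
    tendsto_neg_atBot_atTop.comp Real.tendsto_log_nhdsGT_zero
  have hlim := ((isLittleO_id_of_tendsto_add_sub hk hadd).tendsto_div_nhds_zero.comp
    hnlog).const_sub p
  rw [sub_zero] at hlim
  refine hlim.congr' ?_
  filter_upwards [self_mem_nhdsWithin, Ioo_mem_nhdsGT one_pos] with u hu hu1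
  have hlog : Real.log u ≠ 0 := (Real.log_neg hu hu1.2).ne
  simp only [Function.comp, k, id, Real.exp_neg, Real.exp_log hu]
  field_simp
  ring

theorem eventually_rpow_le (hf : Measurable f) (hfpos : ∀ s, 0 < s → 0 < f s)
    (hrv : RegularlyVaryingAtZero f p) {q : ℝ} (hq : p < q) :
    ∀ᶠ u in 𝓝[>] 0, u ^ q ≤ f u := by
  filter_upwards [(hrv.tendsto_log_div_log hf hfpos).eventually (gt_mem_nhds hq),
    self_mem_nhdsWithin, Ioo_mem_nhdsGT one_pos] with u hlt hu hu1
  rw [div_lt_iff_of_neg (Real.log_neg hu hu1.2)] at hlt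
  rw [Real.rpow_def_of_pos hu, ← Real.exp_log (hfpos u hu)]
  exact Real.exp_le_exp.2 (by linarith)

theorem eventually_le_rpow (hf : Measurable f) (hfpos : ∀ s, 0 < s → 0 < f s)
    (hrv : RegularlyVaryingAtZero f p) {q : ℝ} (hq : q < p) :
    ∀ᶠ u in 𝓝[>] 0, f u ≤ u ^ q := by
  filter_upwards [(hrv.tendsto_log_div_log hf hfpos).eventually (lt_mem_nhds hq),
    self_mem_nhdsWithin, Ioo_mem_nhdsGT one_pos] with u hlt hu hu1
  rw [lt_div_iff_of_neg (Real.log_neg hu hu1.2)] at hlt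
  rw [Real.rpow_def_of_pos hu, ← Real.exp_log (hfpos u hu)]
  exact Real.exp_le_exp.2 (by linarith)

end RegularlyVaryingAtZero

theorem iUnion_Ioc_div_two_pow {δ : ℝ} (hδ : 0 < δ) :
    ⋃ n : ℕ, Ioc (δ / 2 ^ (n + 1)) (δ / 2 ^ n) = Ioc 0 δ := by
  ext u
  simp only [mem_iUnion, mem_Ioc]
  constructor
  · rintro ⟨n, h₁, h₂⟩
    exact ⟨lt_of_le_of_lt (by positivity) h₁,
      h₂.trans (div_le_self hδ.le (one_le_pow₀ one_le_two))⟩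
  · rintro ⟨hu, huδ⟩
    obtain ⟨n, h₁, h₂⟩ := exists_nat_pow_near ((one_le_div hu).2 huδ) one_lt_two
    refine ⟨n, ?_, ?_⟩
    · rwa [div_lt_iff₀ (by positivity), ← div_lt_iff₀' hu]
    · rwa [le_div_iff₀ (by positivity), ← le_div_iff₀' hu]

theorem pairwise_disjoint_Ioc_div_two_pow {δ : ℝ} (hδ : 0 ≤ δ) :
    Pairwise (Function.onFun Disjoint fun n : ℕ => Ioc (δ / 2 ^ (n + 1)) (δ / 2 ^ n)) := by
  have hanti : Antitone fun n : ℕ => δ / 2 ^ n := fun m n h =>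
    div_le_div_of_nonneg_left hδ (by positivity) (pow_le_pow_right₀ one_le_two h)
  simpa using hanti.pairwise_disjoint_on_Ioc_succ

section NegativeMoments

variable {Ω : Type*} [MeasurableSpace Ω] {μ : Measure Ω} {X : Ω → ℝ}

theorem eventually_measure_le_mul_of_tendsto [IsFiniteMeasure μ] {κ K : ℝ}
    (hF : Tendsto (fun u => (μ {ω | X ω ≤ u}).toReal / u) (𝓝[>] 0) (𝓝 κ)) (hK : κ < K) :
    ∀ᶠ u in 𝓝[>] 0, μ {ω | X ω ≤ u} ≤ ENNReal.ofReal (K * u) := by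
  filter_upwards [hF.eventually (gt_mem_nhds hK), self_mem_nhdsWithin] with u h hu
  rw [div_lt_iff₀ hu] at h
  rw [← ofReal_toReal (measure_ne_top μ _)]
  exact ofReal_le_ofReal h.le

theorem eventually_mul_le_measure_preimage_Ioc_half [IsFiniteMeasure μ] (hX : Measurable X)
    {κ a : ℝ} (hF : Tendsto (fun u => (μ {ω | X ω ≤ u}).toReal / u) (𝓝[>] 0) (𝓝 κ))
    (ha : a < κ / 2) :
    ∀ᶠ u in 𝓝[>] 0, ENNReal.ofReal (a * u) ≤ μ (X ⁻¹' Ioc (u / 2) u) := by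
  have hhalf : Tendsto (fun u : ℝ => u / 2) (𝓝[>] 0) (𝓝[>] 0) :=
    tendsto_nhdsWithin_of_tendsto_nhds_of_eventually_within _
      (by simpa using ((tendsto_id (x := 𝓝 (0 : ℝ))).div_const 2).mono_left nhdsWithin_le_nhds)
      (eventually_nhdsWithin_of_forall fun u (hu : 0 < u) => half_pos hu)
  have hdiff := hF.sub ((hF.comp hhalf).div_const 2)
  rw [show κ - κ / 2 = κ / 2 by ring] at hdiff
  filter_upwards [hdiff.eventually (lt_mem_nhds ha), self_mem_nhdsWithin] with u h hu
  have hsub : {ω | X ω ≤ u / 2} ⊆ {ω | X ω ≤ u} :=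
    fun ω (h : X ω ≤ u / 2) => h.trans (half_le_self (le_of_lt hu))
  have hshell : X ⁻¹' Ioc (u / 2) u = {ω | X ω ≤ u} \ {ω | X ω ≤ u / 2} := by
    ext ω
    simp [and_comm]
  simp only [Function.comp] at h
  rw [div_div, div_mul_cancel₀ u two_ne_zero, ← sub_div, lt_div_iff₀ hu] at h
  rw [← ofReal_measureReal, hshell, measureReal_sdiff hsub (measurableSet_le hX measurable_const)]
  exact ofReal_le_ofReal h.le

theorem setLIntegral_preimage_Ioc_eq_tsum (hX : Measurable X) {δ : ℝ} (hδ : 0 < δ)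
    (g : ℝ → ℝ≥0∞) :
    ∫⁻ ω in X ⁻¹' Ioc 0 δ, g (X ω) ∂μ =
      ∑' n : ℕ, ∫⁻ ω in X ⁻¹' Ioc (δ / 2 ^ n / 2) (δ / 2 ^ n), g (X ω) ∂μ := by
  simp_rw [div_div, ← pow_succ]
  rw [← iUnion_Ioc_div_two_pow hδ, preimage_iUnion]
  exact lintegral_iUnion (fun n => hX measurableSet_Ioc)
    ((pairwise_disjoint_Ioc_div_two_pow hδ.le).mono fun _ _ h => h.preimage X) _

theorem setLIntegral_rpow_neg_lt_top (hX : Measurable X) {α K δ : ℝ} (hα₀ : 0 ≤ α)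
    (hα₁ : α < 1) (hδ : 0 < δ) (hF : ∀ u ∈ Ioc 0 δ, μ {ω | X ω ≤ u} ≤ ENNReal.ofReal (K * u)) :
    ∫⁻ ω in X ⁻¹' Ioc 0 δ, ENNReal.ofReal (X ω ^ (-α)) ∂μ < ∞ := by
  set r : ℝ := 2 ^ (α - 1)
  have hr : r < 1 := Real.rpow_lt_one_of_one_lt_of_neg one_lt_two (by linarith)
  have hshell (n : ℕ) :
      ∫⁻ ω in X ⁻¹' Ioc (δ / 2 ^ n / 2) (δ / 2 ^ n), ENNReal.ofReal (X ω ^ (-α)) ∂μ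
        ≤ ENNReal.ofReal (2 ^ α * K * δ ^ (1 - α)) * ENNReal.ofReal r ^ n := by
    set q := δ / 2 ^ n
    have hq : q ∈ Ioc 0 δ := ⟨by positivity, div_le_self hδ.le (one_le_pow₀ one_le_two)⟩
    have hterm : (q / 2) ^ (-α) * (K * q) = 2 ^ α * K * δ ^ (1 - α) * r ^ n := by
      have h : q ^ (-α) * q = δ ^ (1 - α) * r ^ n := by
        rw [← Real.rpow_add_one hq.1.ne', neg_add_eq_sub, Real.div_rpow hδ.le (by positivity),
          ← Real.rpow_pow_comm zero_le_two, div_eq_mul_inv, ← inv_pow,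
          ← Real.rpow_neg zero_le_two, neg_sub]
      rw [Real.div_rpow hq.1.le zero_le_two, Real.rpow_neg zero_le_two, div_inv_eq_mul]
      linear_combination (2 ^ α * K) * h
    calc ∫⁻ ω in X ⁻¹' Ioc (q / 2) q, ENNReal.ofReal (X ω ^ (-α)) ∂μ
        ≤ ∫⁻ _ in X ⁻¹' Ioc (q / 2) q, ENNReal.ofReal ((q / 2) ^ (-α)) ∂μ :=
          setLIntegral_mono measurable_const fun ω hω => ofReal_le_ofReal <|
            Real.rpow_le_rpow_of_nonpos (half_pos hq.1) hω.1.le (by linarith)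
      _ = ENNReal.ofReal ((q / 2) ^ (-α)) * μ (X ⁻¹' Ioc (q / 2) q) := setLIntegral_const _ _
      _ ≤ ENNReal.ofReal ((q / 2) ^ (-α)) * ENNReal.ofReal (K * q) := by
          gcongr
          exact (measure_mono fun ω hω => hω.2).trans (hF q hq)
      _ = _ := by
          rw [← ofReal_mul (by positivity), hterm, ofReal_mul' (by positivity),
            ofReal_pow (by positivity)]
  rw [setLIntegral_preimage_Ioc_eq_tsum hX hδ fun u => ENNReal.ofReal (u ^ (-α))]
  calc _ ≤ ∑' n : ℕ, ENNReal.ofReal (2 ^ α * K * δ ^ (1 - α)) * ENNReal.ofReal r ^ n :=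
        ENNReal.tsum_le_tsum hshell
    _ < ∞ := by
        rw [ENNReal.tsum_mul_left]
        exact mul_lt_top ofReal_lt_top (tsum_geometric_lt_top.2 (ofReal_lt_one.2 hr))

theorem setLIntegral_rpow_neg_eq_top (hX : Measurable X) {β a δ : ℝ} (hβ : 1 ≤ β) (ha : 0 < a)
    (hδ : 0 < δ) (hshell : ∀ u ∈ Ioc 0 δ, ENNReal.ofReal (a * u) ≤ μ (X ⁻¹' Ioc (u / 2) u)) :
    ∫⁻ ω in X ⁻¹' Ioc 0 δ, ENNReal.ofReal (X ω ^ (-β)) ∂μ = ∞ := by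
  have hterm (n : ℕ) : ENNReal.ofReal (a * δ ^ (1 - β)) ≤
      ∫⁻ ω in X ⁻¹' Ioc (δ / 2 ^ n / 2) (δ / 2 ^ n), ENNReal.ofReal (X ω ^ (-β)) ∂μ := by
    set q := δ / 2 ^ n
    have hq : q ∈ Ioc 0 δ := ⟨by positivity, div_le_self hδ.le (one_le_pow₀ one_le_two)⟩
    calc ENNReal.ofReal (a * δ ^ (1 - β)) ≤ ENNReal.ofReal (q ^ (-β) * (a * q)) := by
          refine ofReal_le_ofReal ?_
          rw [mul_left_comm, ← Real.rpow_add_one hq.1.ne', neg_add_eq_sub]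
          exact mul_le_mul_of_nonneg_left
            (Real.rpow_le_rpow_of_nonpos hq.1 hq.2 (by linarith)) ha.le
      _ = ENNReal.ofReal (q ^ (-β)) * ENNReal.ofReal (a * q) := ofReal_mul (by positivity)
      _ ≤ ENNReal.ofReal (q ^ (-β)) * μ (X ⁻¹' Ioc (q / 2) q) := by
          gcongr
          exact hshell q hq
      _ = ∫⁻ _ in X ⁻¹' Ioc (q / 2) q, ENNReal.ofReal (q ^ (-β)) ∂μ :=
          (setLIntegral_const _ _).symm
      _ ≤ ∫⁻ ω in X ⁻¹' Ioc (q / 2) q, ENNReal.ofReal (X ω ^ (-β)) ∂μ :=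
          setLIntegral_mono' (hX measurableSet_Ioc) fun ω hω => ofReal_le_ofReal <|
            Real.rpow_le_rpow_of_nonpos ((half_pos hq.1).trans hω.1) hω.2 (by linarith)
  rw [setLIntegral_preimage_Ioc_eq_tsum hX hδ fun u => ENNReal.ofReal (u ^ (-β))]
  refine top_unique ((ENNReal.tsum_const_eq_top_of_ne_zero ?_).symm.le.trans
    (ENNReal.tsum_le_tsum hterm))
  exact (ofReal_pos.2 (mul_pos ha (Real.rpow_pos_of_pos hδ _))).ne'

theorem lintegral_ofReal_one_div_lt_top [IsFiniteMeasure μ] (hX : Measurable X)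
    (hXpos : ∀ᵐ ω ∂μ, 0 < X ω) {f : ℝ → ℝ} {α K δ m : ℝ} (hα₀ : 0 ≤ α) (hα₁ : α < 1)
    (hδ : 0 < δ) (hm : 0 < m) (hF : ∀ u ∈ Ioc 0 δ, μ {ω | X ω ≤ u} ≤ ENNReal.ofReal (K * u))
    (hf_small : ∀ u ∈ Ioc 0 δ, u ^ α ≤ f u) (hf_large : ∀ u, δ < u → m ≤ f u) :
    ∫⁻ ω, ENNReal.ofReal (1 / f (X ω)) ∂μ < ∞ := by
  have hbound : ∀ᵐ ω ∂μ, ENNReal.ofReal (1 / f (X ω)) ≤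
      (X ⁻¹' Ioc 0 δ).indicator (fun ω => ENNReal.ofReal (X ω ^ (-α))) ω +
        ENNReal.ofReal (1 / m) := by
    filter_upwards [hXpos] with ω hω
    by_cases hωδ : X ω ≤ δ
    · have hmem : ω ∈ X ⁻¹' Ioc 0 δ := ⟨hω, hωδ⟩
      rw [indicator_of_mem hmem, Real.rpow_neg hω.le, ← one_div]
      exact le_add_right (ofReal_le_ofReal
        (one_div_le_one_div_of_le (by positivity) (hf_small _ hmem)))
    · exact le_add_left (ofReal_le_ofReal
        (one_div_le_one_div_of_le hm (hf_large _ (not_le.1 hωδ))))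
  calc ∫⁻ ω, ENNReal.ofReal (1 / f (X ω)) ∂μ
      ≤ ∫⁻ ω, (X ⁻¹' Ioc 0 δ).indicator (fun ω => ENNReal.ofReal (X ω ^ (-α))) ω +
          ENNReal.ofReal (1 / m) ∂μ := lintegral_mono_ae hbound
    _ = ∫⁻ ω in X ⁻¹' Ioc 0 δ, ENNReal.ofReal (X ω ^ (-α)) ∂μ +
          ENNReal.ofReal (1 / m) * μ univ := by
        rw [lintegral_add_right _ measurable_const, lintegral_indicator (hX measurableSet_Ioc),
          lintegral_const]
    _ < ∞ := add_lt_top.2 ⟨setLIntegral_rpow_neg_lt_top hX hα₀ hα₁ hδ hF,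
          mul_lt_top ofReal_lt_top (measure_lt_top _ _)⟩

theorem lintegral_ofReal_one_div_eq_top (hX : Measurable X) {f : ℝ → ℝ} {β a δ : ℝ}
    (hβ : 1 ≤ β) (ha : 0 < a) (hδ : 0 < δ)
    (hshell : ∀ u ∈ Ioc 0 δ, ENNReal.ofReal (a * u) ≤ μ (X ⁻¹' Ioc (u / 2) u))
    (hf_small : ∀ u ∈ Ioc 0 δ, 0 < f u ∧ f u ≤ u ^ β) :
    ∫⁻ ω, ENNReal.ofReal (1 / f (X ω)) ∂μ = ∞ := by
  refine top_unique ?_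
  calc ∞ = ∫⁻ ω in X ⁻¹' Ioc 0 δ, ENNReal.ofReal (X ω ^ (-β)) ∂μ :=
        (setLIntegral_rpow_neg_eq_top hX hβ ha hδ hshell).symm
    _ ≤ ∫⁻ ω in X ⁻¹' Ioc 0 δ, ENNReal.ofReal (1 / f (X ω)) ∂μ :=
        setLIntegral_mono' (hX measurableSet_Ioc) fun ω hω => ofReal_le_ofReal <| by
          rw [Real.rpow_neg hω.1.le, ← one_div]
          exact one_div_le_one_div_of_le (hf_small _ hω).1 (hf_small _ hω).2
    _ ≤ ∫⁻ ω, ENNReal.ofReal (1 / f (X ω)) ∂μ := setLIntegral_le_lintegral _ _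

end NegativeMoments

theorem neg_moment_of_rv_at_zero_general {Ω : Type*} [MeasurableSpace Ω]
    (μ : Measure Ω) [IsProbabilityMeasure μ]
    (X : Ω → ℝ) (hX : Measurable X)
    (hXpos : ∀ᵐ ω ∂μ, 0 < X ω) (κ : ℝ) (hκ : 0 < κ)
    (hsmall : Tendsto (fun u => (μ {ω | X ω ≤ u}).toReal / u) (𝓝[>] (0 : ℝ)) (𝓝 κ))
    (f : ℝ → ℝ) (hf : Measurable f) (hfpos : ∀ s : ℝ, 0 < s → 0 < f s)
    (p : ℝ) (hp : 0 < p) (hrv : RegularlyVaryingAtZero f p)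
    (hinf : ∀ s₀ : ℝ, 0 < s₀ → 0 < sInf (f '' Set.Ici s₀)) :
    (p < 1 → ∫⁻ ω, ENNReal.ofReal (1 / f (X ω)) ∂μ < ∞) ∧
    (1 < p → ∫⁻ ω, ENNReal.ofReal (1 / f (X ω)) ∂μ = ∞) := by
  constructor
  · intro hp1
    obtain ⟨δ, hδ, hδ_good⟩ := mem_nhdsGT_iff_exists_Ioc_subset.1
      ((hrv.eventually_rpow_le hf hfpos (show p < (p + 1) / 2 by linarith)).and
        (eventually_measure_le_mul_of_tendsto hsmall (show κ < 2 * κ by linarith)))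
    have hbdd : BddBelow (f '' Ici δ) :=
      ⟨0, by rintro _ ⟨s, hs, rfl⟩; exact (hfpos s (hδ.trans_le hs)).le⟩
    exact lintegral_ofReal_one_div_lt_top hX hXpos (by linarith) (by linarith) hδ (hinf δ hδ)
      (fun u hu => (hδ_good hu).2) (fun u hu => (hδ_good hu).1)
      (fun u hu => csInf_le hbdd ⟨u, hu.le, rfl⟩)
  · intro hp1
    obtain ⟨δ, hδ, hδ_good⟩ := mem_nhdsGT_iff_exists_Ioc_subset.1
      ((hrv.eventually_le_rpow hf hfpos (show (p + 1) / 2 < p by linarith)).and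
        (eventually_mul_le_measure_preimage_Ioc_half hX hsmall (show κ / 4 < κ / 2 by linarith)))
    exact lintegral_ofReal_one_div_eq_top hX (by linarith) (by positivity) hδ
      (fun u hu => (hδ_good hu).2) (fun u hu => ⟨hfpos u hu.1, (hδ_good hu).1⟩)

theorem neg_moment_of_rv_at_zero {Ω : Type*} [MeasurableSpace Ω]
    (μ : Measure Ω) [IsProbabilityMeasure μ]
    (X : Ω → ℝ) (hX : Measurable X) (hXnonneg : ∀ ω, 0 ≤ X ω)
    (hXpos : ∀ᵐ ω ∂μ, 0 < X ω) (κ : ℝ) (hκ : 0 < κ)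
    (hsmall : Tendsto (fun u => (μ {ω | X ω ≤ u}).toReal / u) (𝓝[>] (0 : ℝ)) (𝓝 κ))
    (f : ℝ → ℝ) (hf : Measurable f) (hfpos : ∀ s : ℝ, 0 < s → 0 < f s)
    (p : ℝ) (hp : 0 < p) (hrv : RegularlyVaryingAtZero f p)
    (hinf : ∀ s₀ : ℝ, 0 < s₀ → 0 < sInf (f '' Set.Ici s₀)) :
    (p < 1 → ∫⁻ ω, ENNReal.ofReal (1 / f (X ω)) ∂μ < ∞) ∧
    (1 < p → ∫⁻ ω, ENNReal.ofReal (1 / f (X ω)) ∂μ = ∞) :=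
  neg_moment_of_rv_at_zero_general μ X hX hXpos κ hκ hsmall f hf hfpos p hp hrv hinf
end

section
/- Gronwall inequality with a nondecreasing Stieltjes driver: let g : [0,T] → ℝ be continuous and nondecreasing with g(0) = 0, let a ≥ 0 and b ≥ 0, and let u : [0,T] → [0,∞) be a bounded measurable function satisfying u(t) ≤ a + b·∫_{(0,t]} u(r) dg(r) for all t ∈ [0,T], where the integral is Lebesgue–Stieltjes with respect to g. Then u(t) ≤ a·exp(b·g(t)) for all t ∈ [0,T]. -/
/-!
Pushing `g.measure` on `(s, t]` forward along the continuous nondecreasing `g` gives Lebesgue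
measure on `(g s, g t]`, so `b ∫_{(0,t]} exp (b g) dg = exp (b g t) - 1` exactly. Consequently a
bound `u ≤ (a + c) exp (b g)` on `[0, T]` with excess `c ≥ 0` improves to the excess
`(1 - exp (-b g T)) c`, and iterating from `c = |C|` drives the excess to `0`.
-/

open MeasureTheory Set Filter Topology

namespace StieltjesFunction

variable {g : StieltjesFunction ℝ}

theorem exists_Ioc_inter_preimage_Iic_eq (hg : Continuous g) {s t c : ℝ} (hst : s ≤ t)
    (hc : g s ≤ c) : ∃ x, Ioc s t ∩ g ⁻¹' Iic c = Ioc s x ∧ g x = min (g t) c := by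
  have hK : IsCompact (Icc s t ∩ g ⁻¹' Iic c) :=
    isCompact_Icc.inter_right (isClosed_Iic.preimage hg)
  obtain ⟨x, ⟨hxst, hxc⟩, hx⟩ := hK.exists_isGreatest ⟨s, ⟨le_rfl, hst⟩, hc⟩
  obtain ⟨y, hyst, hy⟩ : ∃ y ∈ Icc s t, g y = min (g t) c :=
    intermediate_value_Icc hst hg.continuousOn ⟨le_min (g.mono hst) hc, min_le_left _ _⟩
  refine ⟨x, ?_, le_antisymm (le_min (g.mono hxst.2) hxc) ?_⟩
  · ext r
    refine ⟨fun ⟨hr, hrc⟩ => ⟨hr.1, hx ⟨Ioc_subset_Icc_self hr, hrc⟩⟩,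
      fun hr => ⟨⟨hr.1, hr.2.trans hxst.2⟩, (g.mono hr.2).trans hxc⟩⟩
  · exact hy ▸ g.mono (hx ⟨hyst, show g y ≤ c from hy ▸ min_le_right _ _⟩)

theorem measure_Ioc_inter_preimage_Iic (hg : Continuous g) {s t : ℝ} (hst : s ≤ t) (c : ℝ) :
    g.measure (Ioc s t ∩ g ⁻¹' Iic c) = ENNReal.ofReal (min (g t) c - g s) := by
  rcases lt_or_ge c (g s) with hc | hc
  · have : Ioc s t ∩ g ⁻¹' Iic c = ∅ :=
      eq_empty_of_forall_notMem fun r hr => (hc.trans_le (g.mono hr.1.1.le)).not_ge hr.2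
    rw [this, measure_empty, ENNReal.ofReal_eq_zero.2 (by linarith [min_le_right (g t) c])]
  · obtain ⟨x, hx, hgx⟩ := exists_Ioc_inter_preimage_Iic_eq hg hst hc
    rw [hx, g.measure_Ioc, hgx]

theorem map_restrict_Ioc (hg : Continuous g) {s t : ℝ} (hst : s ≤ t) :
    (g.measure.restrict (Ioc s t)).map g = volume.restrict (Ioc (g s) (g t)) := by
  have : IsFiniteMeasure (g.measure.restrict (Ioc s t)) :=
    isFiniteMeasure_restrict.2 measure_Ioc_lt_top.ne
  refine Measure.ext_of_Iic _ _ fun c => ?_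
  rw [Measure.map_apply g.mono.measurable measurableSet_Iic,
    Measure.restrict_apply (measurableSet_Iic.preimage g.mono.measurable), inter_comm,
    measure_Ioc_inter_preimage_Iic hg hst, Measure.restrict_apply measurableSet_Iic, inter_comm,
    Ioc_inter_Iic, Real.volume_Ioc]

theorem setLIntegral_Ioc_comp (hg : Continuous g) {s t : ℝ} (hst : s ≤ t) {f : ℝ → ENNReal}
    (hf : Measurable f) :
    ∫⁻ r in Ioc s t, f (g r) ∂g.measure = ∫⁻ y in Ioc (g s) (g t), f y := by
  rw [← map_restrict_Ioc hg hst, lintegral_map hf g.mono.measurable]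

theorem setLIntegral_Ioc_exp (hg : Continuous g) {s t : ℝ} (hst : s ≤ t) (b : ℝ) :
    ∫⁻ r in Ioc s t, ENNReal.ofReal (Real.exp (b * g r)) ∂g.measure
      = ENNReal.ofReal (∫ y in g s..g t, Real.exp (b * y)) := by
  have hint : IntegrableOn (fun y => Real.exp (b * y)) (Ioc (g s) (g t)) :=
    (by fun_prop : Continuous fun y => Real.exp (b * y)).integrableOn_Icc.mono_set
      Ioc_subset_Icc_self
  rw [setLIntegral_Ioc_comp hg hst (f := fun y => ENNReal.ofReal (Real.exp (b * y))) (by fun_prop),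
    ← ofReal_integral_eq_lintegral_ofReal hint (.of_forall fun _ => (Real.exp_pos _).le),
    intervalIntegral.integral_of_le (g.mono hst)]

end StieltjesFunction

theorem mul_integral_exp_mul (b x y : ℝ) :
    b * ∫ r in x..y, Real.exp (b * r) = Real.exp (b * y) - Real.exp (b * x) := by
  rw [← intervalIntegral.integral_const_mul]
  refine intervalIntegral.integral_eq_sub_of_hasDerivAt (f := fun r => Real.exp (b * r))
    (fun r _ => ?_) ?_
  · simpa [mul_comm] using ((hasDerivAt_id r).const_mul b).exp
  · exact (by fun_prop : Continuous fun r => b * Real.exp (b * r)).intervalIntegrable _ _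

theorem gronwall_stieltjes_step {g : StieltjesFunction ℝ} (hg : Continuous g) (hg0 : g 0 = 0)
    {T a b c : ℝ} (hb : 0 ≤ b) (ha : 0 ≤ a) (hc : 0 ≤ c) {u : ℝ → ℝ}
    (hineq : ∀ t ∈ Icc 0 T,
      u t ≤ a + b * (∫⁻ r in Ioc 0 t, ENNReal.ofReal (u r) ∂g.measure).toReal)
    (hu : ∀ t ∈ Icc 0 T, u t ≤ (a + c) * Real.exp (b * g t)) :
    ∀ t ∈ Icc 0 T, u t ≤ (a + (1 - Real.exp (-(b * g T))) * c) * Real.exp (b * g t) := by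
  intro t ht
  set J := ∫⁻ r in Ioc 0 t, ENNReal.ofReal (Real.exp (b * g r)) ∂g.measure with hJ_def
  have hac : 0 ≤ a + c := add_nonneg ha hc
  have hJ : J = ENNReal.ofReal (∫ y in 0..g t, Real.exp (b * y)) := by
    rw [hJ_def, StieltjesFunction.setLIntegral_Ioc_exp hg ht.1, hg0]
  have hbJ : b * J.toReal = Real.exp (b * g t) - 1 := by
    rw [hJ, ENNReal.toReal_ofReal (intervalIntegral.integral_nonneg
      (hg0 ▸ g.mono ht.1) fun _ _ => (Real.exp_pos _).le), mul_integral_exp_mul, mul_zero,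
      Real.exp_zero]
  have hgm : Measurable g := g.mono.measurable
  have hle : ∫⁻ r in Ioc 0 t, ENNReal.ofReal (u r) ∂g.measure ≤ ENNReal.ofReal (a + c) * J := by
    calc ∫⁻ r in Ioc 0 t, ENNReal.ofReal (u r) ∂g.measure
        ≤ ∫⁻ r in Ioc 0 t, ENNReal.ofReal ((a + c) * Real.exp (b * g r)) ∂g.measure :=
          setLIntegral_mono (by fun_prop) fun r hr =>
            ENNReal.ofReal_le_ofReal (hu r ⟨hr.1.le, hr.2.trans ht.2⟩)
      _ = ENNReal.ofReal (a + c) * J := by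
          simp_rw [ENNReal.ofReal_mul hac]
          exact lintegral_const_mul _ (by fun_prop)
  have hint : (∫⁻ r in Ioc 0 t, ENNReal.ofReal (u r) ∂g.measure).toReal ≤ (a + c) * J.toReal := by
    have hfin : ENNReal.ofReal (a + c) * J ≠ ⊤ :=
      ENNReal.mul_ne_top ENNReal.ofReal_ne_top (hJ ▸ ENNReal.ofReal_ne_top)
    simpa [ENNReal.toReal_mul, ENNReal.toReal_ofReal hac] using ENNReal.toReal_mono hfin hle
  have hqE : Real.exp (-(b * g T)) * Real.exp (b * g t) ≤ 1 := by
    rw [← Real.exp_add, Real.exp_le_one_iff]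
    nlinarith [g.mono ht.2]
  calc u t ≤ a + b * (∫⁻ r in Ioc 0 t, ENNReal.ofReal (u r) ∂g.measure).toReal := hineq t ht
    _ ≤ a + (a + c) * (b * J.toReal) := by nlinarith
    _ = (a + c) * Real.exp (b * g t) - c := by rw [hbJ]; ring
    _ ≤ (a + (1 - Real.exp (-(b * g T))) * c) * Real.exp (b * g t) := by
        nlinarith [mul_le_mul_of_nonneg_left hqE hc]

theorem gronwall_stieltjes_general (g : StieltjesFunction ℝ)
    (hgcont : Continuous g) (hg0 : g 0 = 0)
    (T : ℝ) (a b : ℝ) (ha : 0 ≤ a) (hb : 0 ≤ b)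
    (u : ℝ → ℝ)
    (C : ℝ) (hbdd : ∀ t, u t ≤ C)
    (hineq : ∀ t ∈ Set.Icc (0 : ℝ) T,
      u t ≤ a + b * (∫⁻ r in Set.Ioc 0 t, ENNReal.ofReal (u r) ∂g.measure).toReal) :
    ∀ t ∈ Set.Icc (0 : ℝ) T, u t ≤ a * Real.exp (b * g t) := by
  intro t ht
  set q := Real.exp (-(b * g T))
  have hq : 0 ≤ 1 - q ∧ 1 - q < 1 := by
    refine ⟨sub_nonneg.2 (Real.exp_le_one_iff.2 ?_), by linarith [Real.exp_pos (-(b * g T))]⟩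
    nlinarith [hg0 ▸ g.mono (ht.1.trans ht.2)]
  have hbound : ∀ m : ℕ, ∀ s ∈ Icc 0 T, u s ≤ (a + (1 - q) ^ m * |C|) * Real.exp (b * g s) := by
    intro m
    induction m with
    | zero =>
      intro s hs
      have : 1 ≤ Real.exp (b * g s) := Real.one_le_exp (mul_nonneg hb (hg0 ▸ g.mono hs.1))
      nlinarith [le_abs_self C, abs_nonneg C, hbdd s]
    | succ m ih =>
      simpa only [pow_succ', mul_assoc] using gronwall_stieltjes_step hgcont hg0 hb ha
        (mul_nonneg (pow_nonneg hq.1 m) (abs_nonneg C)) hineq ih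
  have hlim : Tendsto (fun m : ℕ => (a + (1 - q) ^ m * |C|) * Real.exp (b * g t)) atTop
      (𝓝 (a * Real.exp (b * g t))) := by
    simpa using (((tendsto_pow_atTop_nhds_zero_of_lt_one hq.1 hq.2).mul_const |C|).const_add
      a).mul_const (Real.exp (b * g t))
  exact ge_of_tendsto' hlim fun m => hbound m t ht

theorem gronwall_stieltjes (g : StieltjesFunction ℝ)
    (hgcont : Continuous g) (hg0 : g 0 = 0)
    (T : ℝ) (hT : 0 < T) (a b : ℝ) (ha : 0 ≤ a) (hb : 0 ≤ b)
    (u : ℝ → ℝ) (hu : Measurable u) (hunonneg : ∀ t, 0 ≤ u t)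
    (C : ℝ) (hbdd : ∀ t, u t ≤ C)
    (hineq : ∀ t ∈ Set.Icc (0 : ℝ) T,
      u t ≤ a + b * (∫⁻ r in Set.Ioc 0 t, ENNReal.ofReal (u r) ∂g.measure).toReal) :
    ∀ t ∈ Set.Icc (0 : ℝ) T, u t ≤ a * Real.exp (b * g t) :=
  gronwall_stieltjes_general g hgcont hg0 T a b ha hb u C hbdd hineq
end
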